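/- arXiv:2104.05983 — 10 statements merged into one kernel-verified Lean document; each statement's English description precedes it below -/
import Mathlib

section
/- Let G = (A ⊎ B, E) be a bipartite graph and k a natural number. Define a UAQ instance as follows: the role set is R = A; the permission set is P = B ⊎ {p_v : v ∈ A} (one fresh permission p_v per vertex v ∈ A); each role v ∈ A is authorized for N(v) ∪ {p_v}; the lower bound set is P_lb = B; and k_p = k. Then there exists S ⊆ A with |S| ≤ k and N(S) = B (i.e., a red-blue dominating set of size at most k) if and only if there exists R_s ⊆ A such that P_lb ⊆ P(R_s) and |P(R_s) \ P_lb| ≤ k_p, where P(R_s) denotes the union of permissions authorized by roles in R_s. -/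
/-- Reduction from Red-Blue Dominating Set to Simple UAQ of Type 1:
roles are `A`, permissions are `B ⊕ A` (a fresh permission `Sum.inr v` per role `v`),
role `v` is authorized for `N(v) ∪ {p_v}`, `P_lb = B`, `k_p = k`. -/
theorem stmt0 {A B : Type} [Fintype A] [Fintype B] [DecidableEq A] [DecidableEq B]
    (N : A → Finset B) (k : ℕ) :
    (∃ S : Finset A, S.card ≤ k ∧ ∀ b : B, ∃ v ∈ S, b ∈ N v) ↔
    (∃ Rs : Finset A,
      (Finset.univ.image (Sum.inl : B → B ⊕ A)) ⊆
        Rs.biUnion (fun v => (N v).image Sum.inl ∪ {Sum.inr v}) ∧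
      ((Rs.biUnion (fun v => (N v).image Sum.inl ∪ {Sum.inr v})) \
        (Finset.univ.image (Sum.inl : B → B ⊕ A))).card ≤ k) := by
  constructor
  · rintro ⟨S, hcard, hcov⟩
    refine ⟨S, ?_, ?_⟩
    · intro x hx
      simp only [Finset.mem_image, Finset.mem_univ, true_and] at hx
      obtain ⟨b, rfl⟩ := hx
      obtain ⟨v, hv, hb⟩ := hcov b
      refine Finset.mem_biUnion.2 ⟨v, hv, ?_⟩
      simp only [Finset.mem_union, Finset.mem_image]
      exact Or.inl ⟨b, hb, rfl⟩
    · calc _ ≤ (S.image Sum.inr).card := by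
            apply Finset.card_le_card
            intro x hx
            rw [Finset.mem_sdiff] at hx
            obtain ⟨hx1, hx2⟩ := hx
            obtain ⟨v, hv, hxv⟩ := Finset.mem_biUnion.1 hx1
            simp only [Finset.mem_union, Finset.mem_image, Finset.mem_singleton] at hxv
            rcases hxv with ⟨b, _, rfl⟩ | rfl
            · exact absurd (by simp) hx2
            · exact Finset.mem_image_of_mem _ hv
        _ ≤ S.card := Finset.card_image_le
        _ ≤ k := hcard
  · rintro ⟨Rs, hsub, hcard⟩
    refine ⟨Rs, ?_, ?_⟩
    · calc Rs.card = (Rs.image Sum.inr).card :=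
            (Finset.card_image_of_injective _ Sum.inr_injective).symm
        _ ≤ _ := by
            apply Finset.card_le_card
            intro x hx
            obtain ⟨v, hv, rfl⟩ := Finset.mem_image.1 hx
            rw [Finset.mem_sdiff]
            constructor
            · exact Finset.mem_biUnion.2 ⟨v, hv, by simp⟩
            · simp
        _ ≤ k := hcard
    · intro b
      have : (Sum.inl b : B ⊕ A) ∈ Rs.biUnion
          (fun v => (N v).image Sum.inl ∪ {Sum.inr v}) :=
        hsub (by simp)
      obtain ⟨v, hv, hxv⟩ := Finset.mem_biUnion.1 this
      simp only [Finset.mem_union, Finset.mem_image, Finset.mem_singleton] at hxv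
      rcases hxv with ⟨b', hb', hbe⟩ | h
      · exact ⟨v, hv, by cases hbe; exact hb'⟩
      · exact absurd h (by simp)
end

section
/- Let R be a finite set of roles, P a finite set of permissions, P_lb ⊆ P, and P : R → powerset(P) an authorization map extended to sets by union. Let R₁ = {r ∈ R : P(r) ⊆ P_lb} and R₂ = R \ R₁. Then there exists S ⊆ R with P_lb ⊆ P(S) and |P(S) \ P_lb| ≤ k_p if and only if there exists S₂ ⊆ R₂ with P_lb ⊆ P(S₂ ∪ R₁) and |P(S₂ ∪ R₁) \ P_lb| ≤ k_p. -/
/-- Correctness of the `O*(2^{|R₂|})` algorithm for Simple UAQ of Type 1: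
with `R₁` the roles authorized only inside `P_lb` and `R₂` the rest,
it suffices to search over subsets of `R₂`, always adding all of `R₁`. -/
theorem stmt2 {ρ π : Type} [Fintype ρ] [DecidableEq ρ] [DecidableEq π]
    (P : ρ → Finset π) (Plb : Finset π) (kp : ℕ) :
    (∃ S : Finset ρ, Plb ⊆ S.biUnion P ∧ ((S.biUnion P) \ Plb).card ≤ kp) ↔
    (∃ S₂ : Finset ρ, S₂ ⊆ Finset.univ \ (Finset.univ.filter (fun r => P r ⊆ Plb)) ∧
      Plb ⊆ (S₂ ∪ Finset.univ.filter (fun r => P r ⊆ Plb)).biUnion P ∧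
      (((S₂ ∪ Finset.univ.filter (fun r => P r ⊆ Plb)).biUnion P) \ Plb).card ≤ kp) := by
  set R₁ := Finset.univ.filter (fun r => P r ⊆ Plb) with hR₁
  constructor
  · rintro ⟨S, hcov, hcard⟩
    refine ⟨S \ R₁, ?_, ?_, ?_⟩
    · intro r hr
      simp only [Finset.mem_sdiff] at hr ⊢
      exact ⟨Finset.mem_univ r, hr.2⟩
    · refine hcov.trans (Finset.biUnion_subset_biUnion_of_subset_left P ?_)
      intro r hr
      by_cases h : P r ⊆ Plb
      · exact Finset.mem_union_right _ (by simp [hR₁, h])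
      · exact Finset.mem_union_left _ (by simp [hr, hR₁, h])
    · refine le_trans (Finset.card_le_card ?_) hcard
      intro p hp
      simp only [Finset.mem_sdiff, Finset.mem_biUnion, Finset.mem_union] at hp ⊢
      obtain ⟨⟨r, hr, hpr⟩, hnp⟩ := hp
      rcases hr with hr | hr
      · exact ⟨⟨r, hr.1, hpr⟩, hnp⟩
      · exact absurd ((Finset.mem_filter.mp hr).2 hpr) hnp
  · rintro ⟨S₂, _, hcov, hcard⟩
    exact ⟨S₂ ∪ R₁, hcov, hcard⟩
end

section
/- Let G = (A ⊎ B, E) be a bipartite graph with A = A₁ ⊎ ⋯ ⊎ A_k and B = B₁ ⊎ ⋯ ⊎ B_k. Construct a UAQ instance with roles R = {r_{uv} : uv ∈ E}, permissions P = {p_{i,j} : (i,j) ∈ [k]×[k]} ∪ A ∪ B, lower bound P_lb = {p_{i,j} : (i,j) ∈ [k]×[k]}, authorization P(r_{uv}) = {u, v, p_{i,j}} whenever u ∈ A_i and v ∈ B_j, k_r = k², and k_p = 2k. Then G has a multicolored biclique (sets A' ⊆ A, B' ⊆ B with |A' ∩ A_i| = |B' ∩ B_i| = 1 for all i ∈ [k]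 such that every pair a ∈ A', b ∈ B' is an edge of G) if and only if there exists R_s ⊆ R with |R_s| ≤ k², P_lb ⊆ P(R_s), and |P(R_s) \ P_lb| ≤ 2k. -/
/-- Permissions of Construction 1: the role for edge `(u,v)` with `u ∈ A_i`, `v ∈ B_j`
is authorized for `{p_{i,j}, u, v}`. -/
def pauthC1 {A B : Type} [DecidableEq A] [DecidableEq B] {k : ℕ}
    (cA : A → Fin k) (cB : B → Fin k) (e : A × B) :
    Finset ((Fin k × Fin k) ⊕ (A ⊕ B)) :=
  {Sum.inl (cA e.1, cB e.2), Sum.inr (Sum.inl e.1), Sum.inr (Sum.inr e.2)}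

lemma fiber_one {α : Type} [DecidableEq α] {k : ℕ} {S : Finset α} {c : α → Fin k}
    (hcard : S.card = k) (hsurj : ∀ i : Fin k, ∃ a ∈ S, c a = i) (i : Fin k) :
    (S.filter (fun a => c a = i)).card = 1 := by
  have hsum : ∑ j : Fin k, (S.filter (fun a => c a = j)).card = k := by
    rw [← Finset.card_eq_sum_card_fiberwise (f := c) (fun a _ => Finset.mem_univ _), hcard]
  by_contra hne
  have hpos : ∀ j : Fin k, 1 ≤ (S.filter (fun a => c a = j)).card := by
    intro j
    obtain ⟨a, ha, hc⟩ := hsurj j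
    exact Finset.card_pos.2 ⟨a, Finset.mem_filter.2 ⟨ha, hc⟩⟩
  have h2 : 2 ≤ (S.filter (fun a => c a = i)).card :=
    lt_of_le_of_ne (hpos i) (Ne.symm hne)
  have : (k : ℕ) < ∑ j : Fin k, (S.filter (fun a => c a = j)).card := by
    calc (k : ℕ) = ∑ _j : Fin k, 1 := by simp
    _ < ∑ j : Fin k, (S.filter (fun a => c a = j)).card :=
      Finset.sum_lt_sum (fun j _ => hpos j) ⟨i, Finset.mem_univ i, by omega⟩
  omega

/-- Construction 1 reduction: `G` has a multicolored biclique iff the constructed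
UAQ instance (with `k_r = k²`, `k_p = 2k`, `P_lb = {p_{i,j}}`) has a solution. -/
theorem stmt3 {A B : Type} [Fintype A] [Fintype B] [DecidableEq A] [DecidableEq B]
    (k : ℕ) (cA : A → Fin k) (cB : B → Fin k) (E : A → B → Prop) [∀ a b, Decidable (E a b)] :
    (∃ (A' : Finset A) (B' : Finset B),
      (∀ i : Fin k, (A'.filter (fun a => cA a = i)).card = 1) ∧
      (∀ i : Fin k, (B'.filter (fun b => cB b = i)).card = 1) ∧
      ∀ a ∈ A', ∀ b ∈ B', E a b) ↔
    (∃ Rs : Finset (A × B),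
      (∀ e ∈ Rs, E e.1 e.2) ∧
      Rs.card ≤ k ^ 2 ∧
      (Finset.univ.image (Sum.inl : Fin k × Fin k → (Fin k × Fin k) ⊕ (A ⊕ B))) ⊆
        Finset.biUnion (β := (Fin k × Fin k) ⊕ (A ⊕ B)) Rs (pauthC1 cA cB) ∧
      (((Finset.biUnion (β := (Fin k × Fin k) ⊕ (A ⊕ B)) Rs (pauthC1 cA cB)) \
        (Finset.univ.image (Sum.inl : Fin k × Fin k → (Fin k × Fin k) ⊕ (A ⊕ B))) :
        Finset ((Fin k × Fin k) ⊕ (A ⊕ B)))).card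
        ≤ 2 * k) := by
  constructor
  · rintro ⟨A', B', hA, hB, hE⟩
    have hcardA : A'.card = k := by
      rw [Finset.card_eq_sum_card_fiberwise (f := cA) (fun a _ => Finset.mem_univ _)]
      simp [hA]
    have hcardB : B'.card = k := by
      rw [Finset.card_eq_sum_card_fiberwise (f := cB) (fun a _ => Finset.mem_univ _)]
      simp [hB]
    refine ⟨A' ×ˢ B', ?_, ?_, ?_, ?_⟩
    · rintro ⟨a, b⟩ hab
      rw [Finset.mem_product] at hab
      exact hE a hab.1 b hab.2
    · rw [Finset.card_product, hcardA, hcardB, sq]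
    · intro x hx
      simp only [Finset.mem_image, Finset.mem_univ, true_and] at hx
      obtain ⟨⟨i, j⟩, rfl⟩ := hx
      have hAi : (A'.filter (fun a => cA a = i)).Nonempty := by
        rw [← Finset.card_pos, hA]; norm_num
      have hBj : (B'.filter (fun b => cB b = j)).Nonempty := by
        rw [← Finset.card_pos, hB]; norm_num
      obtain ⟨a, ha⟩ := hAi
      obtain ⟨b, hb⟩ := hBj
      simp only [Finset.mem_filter] at ha hb
      refine Finset.mem_biUnion.2 ⟨(a, b), Finset.mem_product.2 ⟨ha.1, hb.1⟩, ?_⟩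
      simp [pauthC1, ha.2, hb.2]
    · have hsub : ((A' ×ˢ B').biUnion (pauthC1 cA cB)) \
          (Finset.univ.image (Sum.inl : Fin k × Fin k → (Fin k × Fin k) ⊕ (A ⊕ B))) ⊆
          A'.image (fun a => Sum.inr (Sum.inl a)) ∪ B'.image (fun b => Sum.inr (Sum.inr b)) := by
        intro x hx
        rw [Finset.mem_sdiff] at hx
        obtain ⟨hx1, hx2⟩ := hx
        obtain ⟨e, he, hxe⟩ := Finset.mem_biUnion.1 hx1
        rw [Finset.mem_product] at he
        simp only [pauthC1, Finset.mem_insert, Finset.mem_singleton] at hxe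
        rcases hxe with rfl | rfl | rfl
        · exact absurd (Finset.mem_image.2 ⟨_, Finset.mem_univ _, rfl⟩) hx2
        · exact Finset.mem_union_left _ (Finset.mem_image.2 ⟨e.1, he.1, rfl⟩)
        · exact Finset.mem_union_right _ (Finset.mem_image.2 ⟨e.2, he.2, rfl⟩)
      calc _ ≤ (A'.image (fun a => Sum.inr (Sum.inl a) : A → (Fin k × Fin k) ⊕ (A ⊕ B)) ∪
            B'.image (fun b => Sum.inr (Sum.inr b))).card := Finset.card_le_card hsub
      _ ≤ (A'.image (fun a => Sum.inr (Sum.inl a) : A → (Fin k × Fin k) ⊕ (A ⊕ B))).card +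
            (B'.image (fun b => Sum.inr (Sum.inr b) : B → (Fin k × Fin k) ⊕ (A ⊕ B))).card :=
        Finset.card_union_le _ _
      _ ≤ A'.card + B'.card := by
        gcongr <;> exact Finset.card_image_le
      _ ≤ 2 * k := by omega
  · rintro ⟨Rs, hRsE, hRscard, hcov, hextra⟩
    set VA := Rs.image Prod.fst with hVA
    set VB := Rs.image Prod.snd with hVB
    -- coverage: for each (i,j) there is an edge in Rs with those colors
    have hcover : ∀ i j : Fin k, ∃ e ∈ Rs, cA e.1 = i ∧ cB e.2 = j := by
      intro i j
      have : (Sum.inl (i, j) : (Fin k × Fin k) ⊕ (A ⊕ B)) ∈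
          Rs.biUnion (pauthC1 cA cB) :=
        hcov (Finset.mem_image.2 ⟨(i, j), Finset.mem_univ _, rfl⟩)
      obtain ⟨e, he, hxe⟩ := Finset.mem_biUnion.1 this
      simp only [pauthC1, Finset.mem_insert, Finset.mem_singleton] at hxe
      rcases hxe with h | h | h
      · rw [Sum.inl.injEq, Prod.mk.injEq] at h
        exact ⟨e, he, h.1.symm, h.2.symm⟩
      · simp at h
      · simp at h
    -- the vertex images are inside the extra permissions
    have hsubA : VA.image (fun a => (Sum.inr (Sum.inl a) : (Fin k × Fin k) ⊕ (A ⊕ B))) ∪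
        VB.image (fun b => Sum.inr (Sum.inr b)) ⊆
        (Rs.biUnion (pauthC1 cA cB)) \
          (Finset.univ.image (Sum.inl : Fin k × Fin k → (Fin k × Fin k) ⊕ (A ⊕ B))) := by
      intro x hx
      rw [Finset.mem_union] at hx
      rcases hx with hx | hx <;> obtain ⟨v, hv, rfl⟩ := Finset.mem_image.1 hx
      · obtain ⟨e, he, rfl⟩ := Finset.mem_image.1 hv
        refine Finset.mem_sdiff.2 ⟨Finset.mem_biUnion.2 ⟨e, he, by simp [pauthC1]⟩, by simp⟩
      · obtain ⟨e, he, rfl⟩ := Finset.mem_image.1 hv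
        refine Finset.mem_sdiff.2 ⟨Finset.mem_biUnion.2 ⟨e, he, by simp [pauthC1]⟩, by simp⟩
    have hunioncard : VA.card + VB.card ≤ 2 * k := by
      have hdisj : Disjoint
          (VA.image (fun a => (Sum.inr (Sum.inl a) : (Fin k × Fin k) ⊕ (A ⊕ B))))
          (VB.image (fun b => Sum.inr (Sum.inr b))) := by
        rw [Finset.disjoint_left]
        rintro x hx hy
        obtain ⟨a, _, rfl⟩ := Finset.mem_image.1 hx
        obtain ⟨b, _, h⟩ := Finset.mem_image.1 hy
        simp at h
      have h1 : (VA.image (fun a => (Sum.inr (Sum.inl a) : (Fin k × Fin k) ⊕ (A ⊕ B)))).card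
          = VA.card := Finset.card_image_of_injective _ (fun a b h => by simpa using h)
      have h2 : (VB.image (fun b => (Sum.inr (Sum.inr b) : (Fin k × Fin k) ⊕ (A ⊕ B)))).card
          = VB.card := Finset.card_image_of_injective _ (fun a b h => by simpa using h)
      calc VA.card + VB.card = _ := by rw [← h1, ← h2, ← Finset.card_union_of_disjoint hdisj]
      _ ≤ _ := Finset.card_le_card hsubA
      _ ≤ 2 * k := hextra
    have hsurjA : ∀ i : Fin k, ∃ a ∈ VA, cA a = i := by
      intro i
      obtain ⟨j, _⟩ : ∃ j : Fin k, True := ⟨i, trivial⟩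
      obtain ⟨e, he, h1, _⟩ := hcover i i
      exact ⟨e.1, Finset.mem_image.2 ⟨e, he, rfl⟩, h1⟩
    have hsurjB : ∀ j : Fin k, ∃ b ∈ VB, cB b = j := by
      intro j
      obtain ⟨e, he, _, h2⟩ := hcover j j
      exact ⟨e.2, Finset.mem_image.2 ⟨e, he, rfl⟩, h2⟩
    have hgeA : k ≤ VA.card := by
      have : (Finset.univ : Finset (Fin k)) ⊆ VA.image cA := by
        intro i _
        obtain ⟨a, ha, hc⟩ := hsurjA i
        exact Finset.mem_image.2 ⟨a, ha, hc⟩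
      calc k = (Finset.univ : Finset (Fin k)).card := by simp
      _ ≤ (VA.image cA).card := Finset.card_le_card this
      _ ≤ VA.card := Finset.card_image_le
    have hgeB : k ≤ VB.card := by
      have : (Finset.univ : Finset (Fin k)) ⊆ VB.image cB := by
        intro i _
        obtain ⟨b, hb, hc⟩ := hsurjB i
        exact Finset.mem_image.2 ⟨b, hb, hc⟩
      calc k = (Finset.univ : Finset (Fin k)).card := by simp
      _ ≤ (VB.image cB).card := Finset.card_le_card this
      _ ≤ VB.card := Finset.card_image_le
    have hcardVA : VA.card = k := by omega
    have hcardVB : VB.card = k := by omega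
    have hfibA := fiber_one hcardVA hsurjA
    have hfibB := fiber_one hcardVB hsurjB
    refine ⟨VA, VB, hfibA, hfibB, ?_⟩
    intro a ha b hb
    obtain ⟨e, he, h1, h2⟩ := hcover (cA a) (cB b)
    have hea : e.1 = a := by
      have hca : (VA.filter (fun x => cA x = cA a)).card = 1 := hfibA (cA a)
      have hma : a ∈ VA.filter (fun x => cA x = cA a) := Finset.mem_filter.2 ⟨ha, rfl⟩
      have hme : e.1 ∈ VA.filter (fun x => cA x = cA a) :=
        Finset.mem_filter.2 ⟨Finset.mem_image.2 ⟨e, he, rfl⟩, h1⟩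
      obtain ⟨x, hx⟩ := Finset.card_eq_one.1 hca
      rw [hx, Finset.mem_singleton] at hma hme
      rw [hme, hma]
    have heb : e.2 = b := by
      have hcb : (VB.filter (fun x => cB x = cB b)).card = 1 := hfibB (cB b)
      have hmb : b ∈ VB.filter (fun x => cB x = cB b) := Finset.mem_filter.2 ⟨hb, rfl⟩
      have hme : e.2 ∈ VB.filter (fun x => cB x = cB b) :=
        Finset.mem_filter.2 ⟨Finset.mem_image.2 ⟨e, he, rfl⟩, h2⟩
      obtain ⟨x, hx⟩ := Finset.card_eq_one.1 hcb
      rw [hx, Finset.mem_singleton] at hmb hme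
      rw [hme, hmb]
    have := hRsE e he
    rwa [hea, heb] at this
end

section
/- Let G = (A ⊎ B, E) be a bipartite graph with A = A₁ ⊎ ⋯ ⊎ A_k and B = B₁ ⊎ ⋯ ⊎ B_k. Construct the UAQ instance of Construction 2: roles R = {r_v : v ∈ A ∪ B} ∪ {s}; permissions P = P_lb = {p_v : v ∈ A ∪ B} ∪ [2k] ∪ {q}; P(r_v) = {p_v, i} if v ∈ A_i, P(r_v) = {p_v, k+i} if v ∈ B_i, P(s) = {p_v : v ∈ A∪B} ∪ {q}; constraints ⟨{r_u, r_v}, 2⟩ for every u ∈ A, v ∈ B with uv ∉ E; k_r = 2k+1 and k_p = 0. Then the UAQ instance has a solution (a set R* ⊆ R with |R*| ≤ 2k+1, P(R*) = P, and |R* ∩ {r_u, r_v}| ≤ 1 for every constraint) if and only if G has a multicolored biclique, i.e., S ⊆ A ∪ B with |S ∩ A_i| = |S ∩ B_i| = 1 for all i ∈ [k] and uv ∈ E for every u ∈ S ∩ A, v ∈ S ∩ B. -/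
/-- Permissions of Construction 2. Role `none` is the extra role `s`, authorized for
all vertex-permissions and `q`; role `some v` (`v` a vertex) is authorized for `p_v`
and the index of the block containing `v` (blocks of `B` giving indices in `[2k]∖[k]`). -/
def pauthC2 {A B : Type} [Fintype A] [Fintype B] [DecidableEq A] [DecidableEq B] {k : ℕ}
    (cA : A → Fin k) (cB : B → Fin k) :
    Option (A ⊕ B) → Finset ((A ⊕ B) ⊕ ((Fin k ⊕ Fin k) ⊕ Unit))
  | none => (Finset.univ.image (fun v : A ⊕ B => Sum.inl v)) ∪ {Sum.inr (Sum.inr ())}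
  | some (Sum.inl a) => {Sum.inl (Sum.inl a), Sum.inr (Sum.inl (Sum.inl (cA a)))}
  | some (Sum.inr b) => {Sum.inl (Sum.inr b), Sum.inr (Sum.inl (Sum.inr (cB b)))}

/-- Construction 2 reduction: the UAQ instance (with `P_lb = P`, `k_r = 2k+1`,
`k_p = 0`, and SoD constraints `⟨{r_u, r_v}, 2⟩` for nonedges `uv`) has a solution iff
`G` has a multicolored biclique. -/
theorem stmt6 {A B : Type} [Fintype A] [Fintype B] [DecidableEq A] [DecidableEq B]
    (k : ℕ) (cA : A → Fin k) (cB : B → Fin k) (E : A → B → Prop) [∀ a b, Decidable (E a b)] :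
    (∃ Rs : Finset (Option (A ⊕ B)),
      Rs.card ≤ 2 * k + 1 ∧
      Finset.biUnion (β := (A ⊕ B) ⊕ ((Fin k ⊕ Fin k) ⊕ Unit)) Rs (pauthC2 cA cB) = Finset.univ ∧
      ∀ u : A, ∀ v : B, ¬ E u v →
        ¬ ((some (Sum.inl u) : Option (A ⊕ B)) ∈ Rs ∧ (some (Sum.inr v) : Option (A ⊕ B)) ∈ Rs)) ↔
    (∃ (SA : Finset A) (SB : Finset B),
      (∀ i : Fin k, (SA.filter (fun a => cA a = i)).card = 1) ∧
      (∀ i : Fin k, (SB.filter (fun b => cB b = i)).card = 1) ∧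
      ∀ u ∈ SA, ∀ v ∈ SB, E u v) := by
  constructor
  · rintro ⟨Rs, hcard, hcov, hsod⟩
    have hmem : ∀ p : (A ⊕ B) ⊕ ((Fin k ⊕ Fin k) ⊕ Unit),
        ∃ r ∈ Rs, p ∈ pauthC2 cA cB r := by
      intro p
      have : p ∈ Finset.biUnion Rs (pauthC2 cA cB) := by
        rw [hcov]; exact Finset.mem_univ p
      simpa [Finset.mem_biUnion] using this
    set SA := Finset.univ.filter (fun a : A => some (Sum.inl a) ∈ Rs) with hSAdef
    set SB := Finset.univ.filter (fun b : B => some (Sum.inr b) ∈ Rs) with hSBdef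
    have hnone : (none : Option (A ⊕ B)) ∈ Rs := by
      obtain ⟨r, hr, hp⟩ := hmem (Sum.inr (Sum.inr ()))
      match r with
      | none => exact hr
      | some (Sum.inl a) => simp [pauthC2] at hp
      | some (Sum.inr b) => simp [pauthC2] at hp
    have hAcov : ∀ i : Fin k, ∃ a ∈ SA, cA a = i := by
      intro i
      obtain ⟨r, hr, hp⟩ := hmem (Sum.inr (Sum.inl (Sum.inl i)))
      match r with
      | none => simp [pauthC2] at hp
      | some (Sum.inl a) =>
          simp [pauthC2] at hp
          exact ⟨a, by simp [hSAdef, hr], hp.symm⟩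
      | some (Sum.inr b) => simp [pauthC2] at hp
    have hBcov : ∀ i : Fin k, ∃ b ∈ SB, cB b = i := by
      intro i
      obtain ⟨r, hr, hp⟩ := hmem (Sum.inr (Sum.inl (Sum.inr i)))
      match r with
      | none => simp [pauthC2] at hp
      | some (Sum.inl a) => simp [pauthC2] at hp
      | some (Sum.inr b) =>
          simp [pauthC2] at hp
          exact ⟨b, by simp [hSBdef, hr], hp.symm⟩
    have hA1 : ∀ i : Fin k, 1 ≤ (SA.filter (fun a => cA a = i)).card := by
      intro i
      obtain ⟨a, ha, hca⟩ := hAcov i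
      exact Finset.card_pos.mpr ⟨a, Finset.mem_filter.mpr ⟨ha, hca⟩⟩
    have hB1 : ∀ i : Fin k, 1 ≤ (SB.filter (fun b => cB b = i)).card := by
      intro i
      obtain ⟨b, hb, hcb⟩ := hBcov i
      exact Finset.card_pos.mpr ⟨b, Finset.mem_filter.mpr ⟨hb, hcb⟩⟩
    have hsumA : (∑ i : Fin k, (SA.filter (fun a => cA a = i)).card) = SA.card :=
      (Finset.card_eq_sum_card_fiberwise (fun a _ => Finset.mem_univ (cA a))).symm
    have hsumB : (∑ i : Fin k, (SB.filter (fun b => cB b = i)).card) = SB.card :=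
      (Finset.card_eq_sum_card_fiberwise (fun b _ => Finset.mem_univ (cB b))).symm
    have hkA : k ≤ SA.card := by
      calc k = ∑ _i : Fin k, 1 := by simp
        _ ≤ ∑ i : Fin k, (SA.filter (fun a => cA a = i)).card :=
            Finset.sum_le_sum (fun i _ => hA1 i)
        _ = SA.card := hsumA
    have hkB : k ≤ SB.card := by
      calc k = ∑ _i : Fin k, 1 := by simp
        _ ≤ ∑ i : Fin k, (SB.filter (fun b => cB b = i)).card :=
            Finset.sum_le_sum (fun i _ => hB1 i)
        _ = SB.card := hsumB
    -- the subset of Rs consisting of none and vertex roles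
    have hsub : insert none
        (SA.image (fun a => (some (Sum.inl a) : Option (A ⊕ B))) ∪
         SB.image (fun b => (some (Sum.inr b) : Option (A ⊕ B)))) ⊆ Rs := by
      intro r hr
      rcases Finset.mem_insert.mp hr with h | h
      · exact h ▸ hnone
      · rcases Finset.mem_union.mp h with h | h
        · obtain ⟨a, ha, rfl⟩ := Finset.mem_image.mp h
          exact (Finset.mem_filter.mp ha).2
        · obtain ⟨b, hb, rfl⟩ := Finset.mem_image.mp h
          exact (Finset.mem_filter.mp hb).2
    have hcardT : (insert none
        (SA.image (fun a => (some (Sum.inl a) : Option (A ⊕ B))) ∪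
         SB.image (fun b => (some (Sum.inr b) : Option (A ⊕ B))))).card
        = 1 + (SA.card + SB.card) := by
      rw [Finset.card_insert_of_notMem (by simp), Finset.card_union_of_disjoint,
        Finset.card_image_of_injective _ (fun x y h => by simpa using h),
        Finset.card_image_of_injective _ (fun x y h => by simpa using h)]
      · omega
      · simp [Finset.disjoint_left]
    have hle : 1 + (SA.card + SB.card) ≤ 2 * k + 1 := by
      rw [← hcardT]
      exact le_trans (Finset.card_le_card hsub) hcard
    have hcardA : SA.card = k := by omega
    have hcardB : SB.card = k := by omega
    have hfA : ∀ i : Fin k, (SA.filter (fun a => cA a = i)).card = 1 := by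
      have h := (Finset.sum_eq_sum_iff_of_le (f := fun _ : Fin k => 1)
        (g := fun i => (SA.filter (fun a => cA a = i)).card)
        (fun i _ => hA1 i)).mp (by rw [hsumA, hcardA]; simp)
      intro i; exact (h i (Finset.mem_univ i)).symm
    have hfB : ∀ i : Fin k, (SB.filter (fun b => cB b = i)).card = 1 := by
      have h := (Finset.sum_eq_sum_iff_of_le (f := fun _ : Fin k => 1)
        (g := fun i => (SB.filter (fun b => cB b = i)).card)
        (fun i _ => hB1 i)).mp (by rw [hsumB, hcardB]; simp)
      intro i; exact (h i (Finset.mem_univ i)).symm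
    refine ⟨SA, SB, hfA, hfB, ?_⟩
    intro u hu v hv
    by_contra hne
    exact hsod u v hne ⟨(Finset.mem_filter.mp hu).2, (Finset.mem_filter.mp hv).2⟩
  · rintro ⟨SA, SB, hA, hB, hE⟩
    refine ⟨insert none
      (SA.image (fun a => (some (Sum.inl a) : Option (A ⊕ B))) ∪
       SB.image (fun b => (some (Sum.inr b) : Option (A ⊕ B)))), ?_, ?_, ?_⟩
    · have hcardA : SA.card = k := by
        rw [Finset.card_eq_sum_card_fiberwise (f := cA) (t := Finset.univ)
          (fun a _ => Finset.mem_univ (cA a))]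
        simp [hA]
      have hcardB : SB.card = k := by
        rw [Finset.card_eq_sum_card_fiberwise (f := cB) (t := Finset.univ)
          (fun b _ => Finset.mem_univ (cB b))]
        simp [hB]
      calc _ ≤ (SA.image (fun a => (some (Sum.inl a) : Option (A ⊕ B))) ∪
             SB.image (fun b => (some (Sum.inr b) : Option (A ⊕ B)))).card + 1 :=
            Finset.card_insert_le _ _
        _ ≤ (SA.image (fun a => (some (Sum.inl a) : Option (A ⊕ B)))).card +
             (SB.image (fun b => (some (Sum.inr b) : Option (A ⊕ B)))).card + 1 := by
            have := Finset.card_union_le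
              (SA.image (fun a => (some (Sum.inl a) : Option (A ⊕ B))))
              (SB.image (fun b => (some (Sum.inr b) : Option (A ⊕ B))))
            omega
        _ ≤ SA.card + SB.card + 1 := by
            have h1 := Finset.card_image_le (s := SA)
              (f := fun a => (some (Sum.inl a) : Option (A ⊕ B)))
            have h2 := Finset.card_image_le (s := SB)
              (f := fun b => (some (Sum.inr b) : Option (A ⊕ B)))
            omega
        _ ≤ 2 * k + 1 := by omega
    · apply Finset.eq_univ_iff_forall.mpr
      intro p
      rw [Finset.mem_biUnion]
      match p with
      | Sum.inl v =>
          exact ⟨none, Finset.mem_insert_self _ _, by simp [pauthC2]⟩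
      | Sum.inr (Sum.inl (Sum.inl i)) =>
          obtain ⟨a, ha⟩ := Finset.card_pos.mp (by rw [hA i]; norm_num)
          obtain ⟨haSA, hca⟩ := Finset.mem_filter.mp ha
          refine ⟨some (Sum.inl a), ?_, by simp [pauthC2, hca]⟩
          exact Finset.mem_insert_of_mem (Finset.mem_union_left _
            (Finset.mem_image_of_mem _ haSA))
      | Sum.inr (Sum.inl (Sum.inr i)) =>
          obtain ⟨b, hb⟩ := Finset.card_pos.mp (by rw [hB i]; norm_num)
          obtain ⟨hbSB, hcb⟩ := Finset.mem_filter.mp hb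
          refine ⟨some (Sum.inr b), ?_, by simp [pauthC2, hcb]⟩
          exact Finset.mem_insert_of_mem (Finset.mem_union_right _
            (Finset.mem_image_of_mem _ hbSB))
      | Sum.inr (Sum.inr u) =>
          exact ⟨none, Finset.mem_insert_self _ _, by simp [pauthC2]⟩
    · rintro u v hne ⟨hu, hv⟩
      have huSA : u ∈ SA := by
        rcases Finset.mem_insert.mp hu with h | h
        · simp at h
        · rcases Finset.mem_union.mp h with h | h
          · obtain ⟨a, ha, heq⟩ := Finset.mem_image.mp h
            obtain rfl : a = u := by simpa using heq
            exact ha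
          · obtain ⟨b, _, heq⟩ := Finset.mem_image.mp h
            simp at heq
      have hvSB : v ∈ SB := by
        rcases Finset.mem_insert.mp hv with h | h
        · simp at h
        · rcases Finset.mem_union.mp h with h | h
          · obtain ⟨a, _, heq⟩ := Finset.mem_image.mp h
            simp at heq
          · obtain ⟨b, hb, heq⟩ := Finset.mem_image.mp h
            obtain rfl : b = v := by simpa using heq
            exact hb
      exact hne (hE u huSA v hvSB)
end

section
/- Let R be a finite set, P a finite set, P : R → powerset(P), and P_lb ⊆ P. Suppose the role-permission graph is K_{α,β}-free, i.e., for every set L of α distinct roles, |⋂_{r∈L} P(r)| ≤ β − 1, where α, β ≥ 2. If a role s satisfies |P(s) ∩ P_lb| ≥ β·k_r^{α−1} + k_r^{α−2} + ⋯ + k_r + 1 and additionally no pair of distinct roles r₁, r₂ satisfies |P(r₁) ∩ P(r₂) ∩ P_lb| ≥ β·k_r^{α−2} + k_r^{α−3} + ⋯ + k_r + 2, then every set S ⊆ R with |S| ≤ k_r and P(s) ∩ P_lb ⊆ P(S) must contain s. -/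
/-- Safety of Reduction Rule 3: in a `K_{α,β}`-free instance in which no pair of
roles shares `β·k_r^{α−2} + k_r^{α−3} + ⋯ + k_r + 2` or more required permissions,
any role `s` authorized for at least `β·k_r^{α−1} + k_r^{α−2} + ⋯ + k_r + 1` required
permissions must belong to every solution of size at most `k_r` covering `P(s) ∩ P_lb`. -/
theorem stmt7 {ρ π : Type} [Fintype ρ] [Fintype π] [DecidableEq ρ] [DecidableEq π]
    (P : ρ → Finset π) (Plb : Finset π) (α β kr : ℕ)
    (hα : 2 ≤ α) (hβ : 2 ≤ β)
    (hfree : ∀ L : Finset ρ, L.card = α →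
      (Finset.univ.filter (fun p : π => ∀ r ∈ L, p ∈ P r)).card ≤ β - 1)
    (s : ρ)
    (hs : β * kr ^ (α - 1) + (∑ j ∈ Finset.range (α - 1), kr ^ j) ≤ (P s ∩ Plb).card)
    (hpairs : ∀ r₁ r₂ : ρ, r₁ ≠ r₂ →
      (P r₁ ∩ P r₂ ∩ Plb).card <
        β * kr ^ (α - 2) + (∑ j ∈ Finset.range (α - 2), kr ^ j) + 1) :
    ∀ S : Finset ρ, S.card ≤ kr → (P s ∩ Plb) ⊆ S.biUnion P → s ∈ S := by
  intro S hScard hcov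
  by_contra hsS
  obtain ⟨a, rfl⟩ : ∃ a, α = a + 2 := ⟨α - 2, by omega⟩
  simp only [Nat.add_sub_cancel, show a + 2 - 1 = a + 1 from rfl] at hs hpairs
  set m := β * kr ^ a + ∑ j ∈ Finset.range a, kr ^ j with hm
  have hsub : P s ∩ Plb ⊆ S.biUnion (fun r => P s ∩ P r ∩ Plb) := by
    intro p hp
    obtain ⟨r, hr, hpr⟩ := Finset.mem_biUnion.mp (hcov hp)
    exact Finset.mem_biUnion.mpr ⟨r, hr, by
      simp only [Finset.mem_inter] at hp ⊢
      exact ⟨⟨hp.1, hpr⟩, hp.2⟩⟩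
  have hcard : (P s ∩ Plb).card ≤ ∑ r ∈ S, (P s ∩ P r ∩ Plb).card :=
    le_trans (Finset.card_le_card hsub) Finset.card_biUnion_le
  have hbound : ∀ r ∈ S, (P s ∩ P r ∩ Plb).card ≤ m := by
    intro r hr
    have hne : s ≠ r := fun h => hsS (h ▸ hr)
    have := hpairs s r hne
    omega
  have hsum : ∑ r ∈ S, (P s ∩ P r ∩ Plb).card ≤ kr * m :=
    calc ∑ r ∈ S, (P s ∩ P r ∩ Plb).card ≤ ∑ _r ∈ S, m := Finset.sum_le_sum hbound
      _ = S.card * m := by rw [Finset.sum_const, smul_eq_mul]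
      _ ≤ kr * m := Nat.mul_le_mul_right m hScard
  have heq : β * kr ^ (a + 1) + (∑ j ∈ Finset.range (a + 1), kr ^ j) = kr * m + 1 := by
    have h1 : ∑ j ∈ Finset.range a, kr ^ (j + 1) = kr * ∑ j ∈ Finset.range a, kr ^ j := by
      rw [Finset.mul_sum]
      exact Finset.sum_congr rfl fun j _ => by ring
    rw [Finset.sum_range_succ' (fun j => kr ^ j) a, h1, hm]
    ring
  rw [heq] at hs
  omega
end

section
/- Let R be a finite set of roles, P a finite set of permissions, P : R → powerset(P), and P_lb ⊆ P. Let L ⊆ R with |L| = α − 1 such that |(⋂_{r∈L} P(r)) ∩ P_lb| > (β − 1)·k_r, and assume the role-permission graph is K_{α,β}-free (every α distinct roles have at most β − 1 common permissions). Then every set R* ⊆ R with |R*| ≤ k_r and P_lb ⊆ P(R*) satisfies R* ∩ L ≠ ∅. -/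
/-- Case `q = 1` of Lemma 5.2: if a set `L` of `α − 1` roles has more than
`(β−1)·k_r` common required permissions and the role-permission graph is
`K_{α,β}`-free, then every solution of size at most `k_r` intersects `L`. -/
theorem stmt8 {ρ π : Type} [Fintype ρ] [Fintype π] [DecidableEq ρ] [DecidableEq π]
    (P : ρ → Finset π) (Plb : Finset π) (α β kr : ℕ)
    (hα : 2 ≤ α) (hβ : 2 ≤ β) (hkr : 1 ≤ kr)
    (hfree : ∀ L : Finset ρ, L.card = α →
      (Finset.univ.filter (fun p : π => ∀ r ∈ L, p ∈ P r)).card ≤ β - 1)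
    (L : Finset ρ) (hL : L.card = α - 1)
    (hcommon : (β - 1) * kr < (Plb.filter (fun p => ∀ r ∈ L, p ∈ P r)).card) :
    ∀ Rstar : Finset ρ, Rstar.card ≤ kr → Plb ⊆ Rstar.biUnion P →
      (Rstar ∩ L).Nonempty := by
  intro Rstar hcard hcov
  by_contra hempty
  rw [Finset.not_nonempty_iff_eq_empty] at hempty
  set S := Plb.filter (fun p => ∀ r ∈ L, p ∈ P r) with hS
  have hsub : S ⊆ Rstar.biUnion (fun r => S.filter (· ∈ P r)) := by
    intro p hp
    have hpPlb : p ∈ Plb := (Finset.mem_filter.mp hp).1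
    obtain ⟨r, hr, hpr⟩ := Finset.mem_biUnion.mp (hcov hpPlb)
    exact Finset.mem_biUnion.mpr ⟨r, hr, Finset.mem_filter.mpr ⟨hp, hpr⟩⟩
  have hbound : ∀ r ∈ Rstar, (S.filter (· ∈ P r)).card ≤ β - 1 := by
    intro r hr
    have hrL : r ∉ L := by
      intro hrL
      have : r ∈ Rstar ∩ L := Finset.mem_inter.mpr ⟨hr, hrL⟩
      simp [hempty] at this
    have hcardins : (insert r L).card = α := by
      rw [Finset.card_insert_of_notMem hrL, hL]
      omega
    refine le_trans (Finset.card_le_card ?_) (hfree (insert r L) hcardins)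
    intro p hp
    rcases Finset.mem_filter.mp hp with ⟨hpS, hpr⟩
    rcases Finset.mem_filter.mp hpS with ⟨_, hall⟩
    refine Finset.mem_filter.mpr ⟨Finset.mem_univ _, ?_⟩
    intro r' hr'
    rcases Finset.mem_insert.mp hr' with h | h
    · subst h; exact hpr
    · exact hall r' h
  have : S.card ≤ (β - 1) * kr := by
    calc S.card ≤ (Rstar.biUnion (fun r => S.filter (· ∈ P r))).card :=
          Finset.card_le_card hsub
      _ ≤ ∑ r ∈ Rstar, (S.filter (· ∈ P r)).card := Finset.card_biUnion_le
      _ ≤ ∑ _r ∈ Rstar, (β - 1) := Finset.sum_le_sum hbound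
      _ = Rstar.card * (β - 1) := by rw [Finset.sum_const, smul_eq_mul]
      _ ≤ kr * (β - 1) := Nat.mul_le_mul_right _ hcard
      _ = (β - 1) * kr := Nat.mul_comm _ _
  omega
end

section
/- Suppose every α distinct roles have at most β−1 common permissions (K_{α,β}-freeness) and every single role r satisfies |P(r) ∩ P_lb| ≤ β·k_r^{α−1} + k_r^{α−2} + ⋯ + k_r² + k_r (i.e., Reduction Rule 3 is not applicable). If |P_lb| > β·k_r^{α} + k_r^{α−1} + ⋯ + k_r² + k_r, then no set S of at most k_r roles satisfies P_lb ⊆ P(S); i.e., the instance is a no-instance. -/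
/-- Lemma 5.5: if the instance is `K_{α,β}`-free, Reduction Rule 3 is not applicable
(every role covers at most `β·k_r^{α−1} + k_r^{α−2} + ⋯ + k_r² + k_r` permissions of
`P_lb`), and `|P_lb| > β·k_r^α + k_r^{α−1} + ⋯ + k_r² + k_r`, then no set of at most
`k_r` roles covers `P_lb`. -/
theorem stmt9 {ρ π : Type} [Fintype ρ] [Fintype π] [DecidableEq ρ] [DecidableEq π]
    (P : ρ → Finset π) (Plb : Finset π) (α β kr : ℕ)
    (hα : 2 ≤ α) (hβ : 2 ≤ β) (hkr : 1 ≤ kr)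
    (hfree : ∀ L : Finset ρ, L.card = α →
      (Finset.univ.filter (fun p : π => ∀ r ∈ L, p ∈ P r)).card ≤ β - 1)
    (hroles : ∀ r : ρ,
      (P r ∩ Plb).card ≤ β * kr ^ (α - 1) + (∑ j ∈ Finset.Ico 1 (α - 1), kr ^ j))
    (hbig : β * kr ^ α + (∑ j ∈ Finset.Ico 1 α, kr ^ j) < Plb.card) :
    ∀ S : Finset ρ, S.card ≤ kr → ¬ Plb ⊆ S.biUnion P := by
  intro S hS hsub
  set h := β * kr ^ (α - 1) + (∑ j ∈ Finset.Ico 1 (α - 1), kr ^ j) with hh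
  have h1 : Plb.card ≤ ∑ r ∈ S, (P r ∩ Plb).card := by
    calc Plb.card ≤ (S.biUnion (fun r => P r ∩ Plb)).card := by
          apply Finset.card_le_card
          intro p hp
          obtain ⟨r, hr, hpr⟩ := Finset.mem_biUnion.mp (hsub hp)
          exact Finset.mem_biUnion.mpr ⟨r, hr, Finset.mem_inter.mpr ⟨hpr, hp⟩⟩
      _ ≤ ∑ r ∈ S, (P r ∩ Plb).card := Finset.card_biUnion_le
  have h2 : ∑ r ∈ S, (P r ∩ Plb).card ≤ kr * h := by
    calc ∑ r ∈ S, (P r ∩ Plb).card ≤ ∑ _r ∈ S, h :=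
          Finset.sum_le_sum (fun r _ => hroles r)
      _ = S.card * h := by rw [Finset.sum_const, smul_eq_mul]
      _ ≤ kr * h := Nat.mul_le_mul_right _ hS
  have hα1 : α - 1 + 1 = α := by omega
  have h3 : kr * h ≤ β * kr ^ α + ∑ j ∈ Finset.Ico 1 α, kr ^ j := by
    have e1 : kr * (β * kr ^ (α - 1)) = β * kr ^ α := by
      rw [mul_comm kr, mul_assoc, ← pow_succ, hα1]
    have e2 : kr * (∑ j ∈ Finset.Ico 1 (α - 1), kr ^ j)
        = ∑ j ∈ Finset.Ico 1 (α - 1), kr ^ (j + 1) := by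
      rw [Finset.mul_sum]
      exact Finset.sum_congr rfl (fun j _ => by rw [pow_succ, mul_comm])
    have e3 : ∑ j ∈ Finset.Ico 1 (α - 1), kr ^ (j + 1)
        = ∑ j ∈ Finset.Ico 2 α, kr ^ j := by
      have := (Finset.sum_Ico_add (fun j => kr ^ j) 1 (α - 1) 1).symm
      rw [hα1] at this
      simpa [add_comm] using this.symm
    have e4 : ∑ j ∈ Finset.Ico 2 α, kr ^ j ≤ ∑ j ∈ Finset.Ico 1 α, kr ^ j :=
      Finset.sum_le_sum_of_subset (Finset.Ico_subset_Ico (by omega) le_rfl)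
    calc kr * h = β * kr ^ α + ∑ j ∈ Finset.Ico 2 α, kr ^ j := by
          rw [hh, mul_add, e1, e2, e3]
      _ ≤ β * kr ^ α + ∑ j ∈ Finset.Ico 1 α, kr ^ j := by omega
  omega
end

section
/- Let p be a permission in P_lb that is authorized by a unique role r (i.e., r is the only role with p ∈ P(r)). Define the reduced instance with roles R' = R \ {r}, required permissions P'_lb = P_lb \ P(r), permission budget k'_p = k_p − |P(r) \ P_lb| (assuming |P(r) \ P_lb| ≤ k_p), role budget k'_r = k_r − 1, permissions P' = P \ P(r), authorization P'(r') = P(r') \ P(r), and each constraint ⟨X, t⟩ with r ∈ X replaced by ⟨X \ {r}, t − 1⟩ (others unchanged). Then the original instance has a solution of size at most k_r if and only if the reduced instance has a solution of size at most k'_r; moreover, if R* is a solution of the reduced instance then R* ∪ {r} is a solution of the original, and if R* is a solution of the original then r ∈ R* and R* \ {r} is a solution of the reduced instance. -/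
/-- A solution of a UAQ instance `(R, P, P_lb, 𝒟, k_r, k_p)`: a set of at most `k_r`
roles from `R` covering `P_lb`, using at most `k_p` permissions outside `P_lb`, and
satisfying every SoD constraint `⟨X, t⟩ ∈ 𝒟` (i.e. containing fewer than `t` roles
of `X`). -/
def UAQSol {ρ π : Type} [DecidableEq ρ] [DecidableEq π]
    (R : Finset ρ) (Pa : ρ → Finset π) (Plb : Finset π)
    (D : Finset (Finset ρ × ℕ)) (kr kp : ℕ) (Rs : Finset ρ) : Prop :=
  Rs ⊆ R ∧ Rs.card ≤ kr ∧ Plb ⊆ Rs.biUnion Pa ∧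
    ((Rs.biUnion Pa) \ Plb).card ≤ kp ∧ ∀ c ∈ D, (Rs ∩ c.1).card < c.2

/-- Safety of Reduction Rule 2 (Lemma 5.1): if `p ∈ P_lb` is authorized by the unique
role `r` and `|P(r) ∖ P_lb| ≤ k_p`, then the instance has a solution iff the reduced
instance (with `r` deleted, its permissions removed, constraints containing `r`
replaced by `⟨X ∖ {r}, t−1⟩`, `k_r' = k_r − 1`, `k_p' = k_p − |P(r) ∖ P_lb|`) has one;
moreover solutions correspond by adding/removing `r`. -/
theorem stmt10 {ρ π : Type} [DecidableEq ρ] [DecidableEq π]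
    (R : Finset ρ) (Pa : ρ → Finset π) (Plb : Finset π)
    (D : Finset (Finset ρ × ℕ)) (kr kp : ℕ) (p : π) (r : ρ)
    (hr : r ∈ R) (hp : p ∈ Plb) (hpr : p ∈ Pa r)
    (huniq : ∀ r' ∈ R, p ∈ Pa r' → r' = r)
    (hbudget : (Pa r \ Plb).card ≤ kp) (hkr : 1 ≤ kr) :
    ((∃ Rs, UAQSol R Pa Plb D kr kp Rs) ↔
      (∃ Rs, UAQSol (R.erase r) (fun r' => Pa r' \ Pa r) (Plb \ Pa r)
        (D.image (fun c => if r ∈ c.1 then (c.1.erase r, c.2 - 1) else c))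
        (kr - 1) (kp - (Pa r \ Plb).card) Rs)) ∧
    (∀ Rs, UAQSol (R.erase r) (fun r' => Pa r' \ Pa r) (Plb \ Pa r)
        (D.image (fun c => if r ∈ c.1 then (c.1.erase r, c.2 - 1) else c))
        (kr - 1) (kp - (Pa r \ Plb).card) Rs →
      UAQSol R Pa Plb D kr kp (insert r Rs)) ∧
    (∀ Rs, UAQSol R Pa Plb D kr kp Rs →
      r ∈ Rs ∧
      UAQSol (R.erase r) (fun r' => Pa r' \ Pa r) (Plb \ Pa r)
        (D.image (fun c => if r ∈ c.1 then (c.1.erase r, c.2 - 1) else c))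
        (kr - 1) (kp - (Pa r \ Plb).card) (Rs.erase r)) := by
  have fwd : ∀ Rs, UAQSol (R.erase r) (fun r' => Pa r' \ Pa r) (Plb \ Pa r)
        (D.image (fun c => if r ∈ c.1 then (c.1.erase r, c.2 - 1) else c))
        (kr - 1) (kp - (Pa r \ Plb).card) Rs →
      UAQSol R Pa Plb D kr kp (insert r Rs) := by
    intro Rs ⟨hsub, hcard, hcov, hbud, hcon⟩
    have hrRs : r ∉ Rs := fun h => (Finset.mem_erase.mp (hsub h)).1 rfl
    refine ⟨?_, ?_, ?_, ?_, ?_⟩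
    · intro x hx
      rcases Finset.mem_insert.mp hx with h | h
      · exact h ▸ hr
      · exact Finset.mem_of_mem_erase (hsub h)
    · rw [Finset.card_insert_of_notMem hrRs]; omega
    · intro q hq
      rw [Finset.biUnion_insert]
      by_cases hqr : q ∈ Pa r
      · exact Finset.mem_union_left _ hqr
      · have := hcov (Finset.mem_sdiff.mpr ⟨hq, hqr⟩)
        obtain ⟨r', hr', hq'⟩ := Finset.mem_biUnion.mp this
        exact Finset.mem_union_right _
          (Finset.mem_biUnion.mpr ⟨r', hr', (Finset.mem_sdiff.mp hq').1⟩)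
    · rw [Finset.biUnion_insert]
      have hsubU : (Pa r ∪ Rs.biUnion Pa) \ Plb ⊆
          (Pa r \ Plb) ∪ ((Rs.biUnion fun r' => Pa r' \ Pa r) \ (Plb \ Pa r)) := by
        intro q hq
        rw [Finset.mem_sdiff, Finset.mem_union] at hq
        obtain ⟨hq1, hq2⟩ := hq
        by_cases hqr : q ∈ Pa r
        · exact Finset.mem_union_left _ (Finset.mem_sdiff.mpr ⟨hqr, hq2⟩)
        · rcases hq1 with h | h
          · exact absurd h hqr
          · obtain ⟨r', hr', hq'⟩ := Finset.mem_biUnion.mp h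
            refine Finset.mem_union_right _ (Finset.mem_sdiff.mpr
              ⟨Finset.mem_biUnion.mpr ⟨r', hr', Finset.mem_sdiff.mpr ⟨hq', hqr⟩⟩, ?_⟩)
            simp [hqr, hq2]
      calc ((Pa r ∪ Rs.biUnion Pa) \ Plb).card
          ≤ ((Pa r \ Plb) ∪ ((Rs.biUnion fun r' => Pa r' \ Pa r) \ (Plb \ Pa r))).card :=
            Finset.card_le_card hsubU
        _ ≤ (Pa r \ Plb).card + ((Rs.biUnion fun r' => Pa r' \ Pa r) \ (Plb \ Pa r)).card :=
            Finset.card_union_le _ _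
        _ ≤ kp := by omega
    · intro c hc
      have hc' := hcon (if r ∈ c.1 then (c.1.erase r, c.2 - 1) else c)
        (Finset.mem_image_of_mem _ hc)
      by_cases hrc : r ∈ c.1
      · simp only [hrc, if_pos] at hc'
        have heq : insert r Rs ∩ c.1 = insert r (Rs ∩ c.1.erase r) := by
          ext x
          simp only [Finset.mem_inter, Finset.mem_insert, Finset.mem_erase]
          constructor
          · rintro ⟨h | h, h2⟩
            · exact Or.inl h
            · exact Or.inr ⟨h, fun he => hrRs (he ▸ h), h2⟩
          · rintro (h | ⟨h1, h2, h3⟩)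
            · exact ⟨Or.inl h, h ▸ hrc⟩
            · exact ⟨Or.inr h1, h3⟩
        rw [heq, Finset.card_insert_of_notMem (by
          simp only [Finset.mem_inter, Finset.mem_erase]; tauto)]
        omega
      · simp only [hrc, if_neg, not_false_iff] at hc'
        have heq : insert r Rs ∩ c.1 = Rs ∩ c.1 := by
          ext x
          simp only [Finset.mem_inter, Finset.mem_insert]
          constructor
          · rintro ⟨h | h, h2⟩
            · exact absurd (h ▸ h2) hrc
            · exact ⟨h, h2⟩
          · tauto
        rw [heq]; exact hc'
  have bwd : ∀ Rs, UAQSol R Pa Plb D kr kp Rs →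
      r ∈ Rs ∧
      UAQSol (R.erase r) (fun r' => Pa r' \ Pa r) (Plb \ Pa r)
        (D.image (fun c => if r ∈ c.1 then (c.1.erase r, c.2 - 1) else c))
        (kr - 1) (kp - (Pa r \ Plb).card) (Rs.erase r) := by
    intro Rs ⟨hsub, hcard, hcov, hbud, hcon⟩
    have hrRs : r ∈ Rs := by
      obtain ⟨r', hr', hp'⟩ := Finset.mem_biUnion.mp (hcov hp)
      exact (huniq r' (hsub hr') hp') ▸ hr'
    refine ⟨hrRs, ?_, ?_, ?_, ?_, ?_⟩
    · exact fun x hx => Finset.mem_erase.mpr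
        ⟨(Finset.mem_erase.mp hx).1, hsub (Finset.mem_of_mem_erase hx)⟩
    · rw [Finset.card_erase_of_mem hrRs]; omega
    · intro q hq
      obtain ⟨hq1, hq2⟩ := Finset.mem_sdiff.mp hq
      obtain ⟨r', hr', hq'⟩ := Finset.mem_biUnion.mp (hcov hq1)
      have hne : r' ≠ r := fun he => hq2 (he ▸ hq')
      exact Finset.mem_biUnion.mpr ⟨r', Finset.mem_erase.mpr ⟨hne, hr'⟩,
        Finset.mem_sdiff.mpr ⟨hq', hq2⟩⟩
    · set B' := (Rs.erase r).biUnion fun r' => Pa r' \ Pa r with hB'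
      have hdisj : Disjoint (B' \ (Plb \ Pa r)) (Pa r \ Plb) := by
        rw [Finset.disjoint_left]
        intro q hq1 hq2
        obtain ⟨hq1, _⟩ := Finset.mem_sdiff.mp hq1
        obtain ⟨r', _, hq'⟩ := Finset.mem_biUnion.mp hq1
        exact (Finset.mem_sdiff.mp hq').2 (Finset.mem_sdiff.mp hq2).1
      have hsubB : (B' \ (Plb \ Pa r)) ∪ (Pa r \ Plb) ⊆ (Rs.biUnion Pa) \ Plb := by
        intro q hq
        rcases Finset.mem_union.mp hq with h | h
        · obtain ⟨hq1, hq2⟩ := Finset.mem_sdiff.mp h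
          obtain ⟨r', hr', hq'⟩ := Finset.mem_biUnion.mp hq1
          obtain ⟨hq3, hq4⟩ := Finset.mem_sdiff.mp hq'
          refine Finset.mem_sdiff.mpr
            ⟨Finset.mem_biUnion.mpr ⟨r', Finset.mem_of_mem_erase hr', hq3⟩, ?_⟩
          intro hqlb
          exact hq2 (Finset.mem_sdiff.mpr ⟨hqlb, hq4⟩)
        · obtain ⟨hq1, hq2⟩ := Finset.mem_sdiff.mp h
          exact Finset.mem_sdiff.mpr ⟨Finset.mem_biUnion.mpr ⟨r, hrRs, hq1⟩, hq2⟩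
      have := Finset.card_le_card hsubB
      rw [Finset.card_union_of_disjoint hdisj] at this
      omega
    · intro c' hc'
      obtain ⟨c, hc, rfl⟩ := Finset.mem_image.mp hc'
      have hcd := hcon c hc
      by_cases hrc : r ∈ c.1
      · simp only [hrc, if_pos]
        have heq : Rs.erase r ∩ c.1.erase r = (Rs ∩ c.1).erase r := by
          ext x
          simp only [Finset.mem_inter, Finset.mem_erase]
          tauto
        have hrm : r ∈ Rs ∩ c.1 := Finset.mem_inter.mpr ⟨hrRs, hrc⟩
        have hpos : 1 ≤ (Rs ∩ c.1).card := Finset.card_pos.mpr ⟨r, hrm⟩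
        rw [heq, Finset.card_erase_of_mem hrm]
        omega
      · simp only [hrc, if_neg, not_false_iff]
        have heq : Rs.erase r ∩ c.1 = Rs ∩ c.1 := by
          ext x
          simp only [Finset.mem_inter, Finset.mem_erase]
          constructor
          · tauto
          · rintro ⟨h1, h2⟩
            exact ⟨⟨fun he => hrc (he ▸ h2), h1⟩, h2⟩
        rw [heq]; exact hcd
  exact ⟨⟨fun ⟨Rs, h⟩ => ⟨Rs.erase r, (bwd Rs h).2⟩,
    fun ⟨Rs, h⟩ => ⟨insert r Rs, fwd Rs h⟩⟩, fwd, bwd⟩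
end

section
/- Let M = (R, ℐ) be a matroid, P : R → powerset(P), P_lb ⊆ P, Y ⊆ P \ P_lb, W ⊆ P_lb, and i ≥ 1. Define ℬ[W', Y, j] = {R' ⊆ R : W' ⊆ P(R') ⊆ P_lb ∪ Y, |R'| = j, R' ∈ ℐ}. Suppose for every W' ⊆ P_lb we have families ℋ[W'] with ℋ[W'] ⊆_rep^{k_r − i + 1} ℬ[W', Y, i−1]. Define 𝒳 = {A ∪ {r} : r ∈ R, P(r) ⊆ P_lb ∪ Y, A ∈ ℋ[W \ P(r)], r ∉ A, A ∪ {r} ∈ ℐ}. Then 𝒳 ⊆_rep^{k_r − i} ℬ[W, Y, i]; i.e., for every B ⊆ R with |B| ≤ k_r − i, if some X ∈ ℬ[W, Y, i] satisfies X ∩ B = ∅ and X ∪ B ∈ ℐ, then some X' ∈ 𝒳 satisfies X' ∩ B = ∅ and X' ∪ B ∈ ℐ, and moreover 𝒳 ⊆ ℬ[W, Y, i]. -/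
/-- `A` fits `B` in the matroid with independent family `Ind`. -/
def Fits {ρ : Type} [DecidableEq ρ] (Ind : Set (Finset ρ)) (A B : Finset ρ) : Prop :=
  A ∩ B = ∅ ∧ A ∪ B ∈ Ind

/-- `F'` is a `q`-representative family of `F`. -/
def RepFam {ρ : Type} [DecidableEq ρ] (Ind : Set (Finset ρ)) (q : ℕ)
    (F' F : Set (Finset ρ)) : Prop :=
  F' ⊆ F ∧ ∀ B : Finset ρ, B.card ≤ q →
    (∃ A ∈ F, Fits Ind A B) → ∃ A' ∈ F', Fits Ind A' B

/-- The DP table entry `ℬ[W, Y, i]`. -/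
def DPTable {ρ π : Type} [DecidableEq ρ] [DecidableEq π] (Ind : Set (Finset ρ))
    (Pa : ρ → Finset π) (Plb Y W : Finset π) (i : ℕ) : Set (Finset ρ) :=
  {R' : Finset ρ | W ⊆ R'.biUnion Pa ∧ R'.biUnion Pa ⊆ Plb ∪ Y ∧
    R'.card = i ∧ R' ∈ Ind}

/-- Inductive step of Lemma 5.7: if every `ℋ[W']` is a `(k_r − i + 1)`-representative
family of `ℬ[W', Y, i−1]`, then the family `𝒳` of all independent sets `A ∪ {r}` with
`P(r) ⊆ P_lb ∪ Y`, `A ∈ ℋ[W ∖ P(r)]`, `r ∉ A`, is a `(k_r − i)`-representative family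
of `ℬ[W, Y, i]`. -/
theorem stmt16 {ρ π : Type} [DecidableEq ρ] [DecidableEq π] (Ind : Set (Finset ρ))
    (hempty : (∅ : Finset ρ) ∈ Ind)
    (hdown : ∀ A ∈ Ind, ∀ B ⊆ A, B ∈ Ind)
    (hexch : ∀ A ∈ Ind, ∀ B ∈ Ind, A.card < B.card → ∃ x ∈ B \ A, insert x A ∈ Ind)
    (Pa : ρ → Finset π) (Plb Y W : Finset π)
    (hY : Y ∩ Plb = ∅) (hW : W ⊆ Plb)
    (kr i : ℕ) (hi : 1 ≤ i)
    (H : Finset π → Set (Finset ρ))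
    (hH : ∀ W' ⊆ Plb, RepFam Ind (kr - i + 1) (H W') (DPTable Ind Pa Plb Y W' (i - 1))) :
    RepFam Ind (kr - i)
      {S : Finset ρ | ∃ (r : ρ) (A : Finset ρ),
        Pa r ⊆ Plb ∪ Y ∧ A ∈ H (W \ Pa r) ∧ r ∉ A ∧ insert r A ∈ Ind ∧
        S = insert r A}
      (DPTable Ind Pa Plb Y W i) := by

  constructor
  · rintro S ⟨r, A, hPr, hA, hrA, hIA, rfl⟩
    have hWsub : W \ Pa r ⊆ Plb := fun x hx => hW (Finset.mem_sdiff.mp hx).1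
    obtain ⟨hWA, hAsub, hcard, hAInd⟩ := (hH _ hWsub).1 hA
    refine ⟨?_, ?_, ?_, hIA⟩
    · intro w hw
      rw [Finset.biUnion_insert]
      by_cases h : w ∈ Pa r
      · exact Finset.mem_union_left _ h
      · exact Finset.mem_union_right _ (hWA (Finset.mem_sdiff.mpr ⟨hw, h⟩))
    · rw [Finset.biUnion_insert]
      exact Finset.union_subset hPr hAsub
    · rw [Finset.card_insert_of_notMem hrA, hcard]
      omega
  · rintro B hB ⟨X, ⟨hWX, hXsub, hXcard, hXInd⟩, hXB, hXBInd⟩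
    have hXne : X.Nonempty := Finset.card_pos.mp (by omega)
    obtain ⟨r, hr⟩ := hXne
    set A0 := X.erase r with hA0
    have hrA0 : r ∉ A0 := Finset.notMem_erase r X
    have hA0X : A0 ⊆ X := Finset.erase_subset r X
    have hrB : r ∉ B := by
      intro h
      have : r ∈ X ∩ B := Finset.mem_inter.mpr ⟨hr, h⟩
      simp [hXB] at this
    have hins : insert r A0 = X := Finset.insert_erase hr
    have hWsub : W \ Pa r ⊆ Plb := fun x hx => hW (Finset.mem_sdiff.mp hx).1
    have hA0mem : A0 ∈ DPTable Ind Pa Plb Y (W \ Pa r) (i - 1) := by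
      refine ⟨?_, ?_, ?_, hdown X hXInd A0 hA0X⟩
      · intro w hw
        obtain ⟨hw1, hw2⟩ := Finset.mem_sdiff.mp hw
        have : w ∈ X.biUnion Pa := hWX hw1
        rw [← hins, Finset.biUnion_insert] at this
        rcases Finset.mem_union.mp this with h | h
        · exact absurd h hw2
        · exact h
      · exact fun x hx => hXsub (Finset.biUnion_subset_biUnion_of_subset_left _ hA0X hx)
      · rw [hA0, Finset.card_erase_of_mem hr, hXcard]
    have hfit : Fits Ind A0 (insert r B) := by
      constructor
      · ext x
        simp only [Finset.mem_inter, Finset.mem_insert, Finset.notMem_empty, iff_false]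
        rintro ⟨hx1, hx2 | hx2⟩
        · exact hrA0 (hx2 ▸ hx1)
        · have : x ∈ X ∩ B := Finset.mem_inter.mpr ⟨hA0X hx1, hx2⟩
          simp [hXB] at this
      · have : A0 ∪ insert r B = X ∪ B := by
          rw [← hins]; ext x; simp [Finset.mem_union, Finset.mem_insert, or_comm, or_left_comm]
        rw [this]; exact hXBInd
    have hcardB : (insert r B).card ≤ kr - i + 1 := by
      rw [Finset.card_insert_of_notMem hrB]; omega
    obtain ⟨A', hA'H, hA'int, hA'Ind⟩ := (hH _ hWsub).2 (insert r B) hcardB ⟨A0, hA0mem, hfit⟩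
    have hrA' : r ∉ A' := by
      intro h
      have : r ∈ A' ∩ insert r B := Finset.mem_inter.mpr ⟨h, Finset.mem_insert_self r B⟩
      simp [hA'int] at this
    have hPr : Pa r ⊆ Plb ∪ Y := fun x hx => hXsub (Finset.mem_biUnion.mpr ⟨r, hr, hx⟩)
    have heq : insert r A' ∪ B = A' ∪ insert r B := by
      ext x; simp [Finset.mem_union, Finset.mem_insert, or_comm, or_left_comm]
    refine ⟨insert r A', ⟨r, A', hPr, hA'H, hrA',
      hdown _ hA'Ind _ (by
        intro x hx
        rcases Finset.mem_insert.mp hx with h | h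
        · exact Finset.mem_union_right _ (h ▸ Finset.mem_insert_self r B)
        · exact Finset.mem_union_left _ h), rfl⟩, ?_, ?_⟩
    · ext x
      simp only [Finset.mem_inter, Finset.mem_insert, Finset.notMem_empty, iff_false]
      rintro ⟨hx1 | hx1, hx2⟩
      · exact hrB (hx1 ▸ hx2)
      · have : x ∈ A' ∩ insert r B := Finset.mem_inter.mpr ⟨hx1, Finset.mem_insert_of_mem hx2⟩
        simp [hA'int] at this
    · rw [heq]; exact hA'Ind
end

section
/- Let (R, P, RP, P_lb, 𝒟, k_r, k_p) be a UAQ instance. Deleting any role r with P(r) ∩ P_lb = ∅ preserves the set of minimal solutions; formally, if R_s is a solution (|R_s| ≤ k_r, P_lb ⊆ P(R_s), |P(R_s) \ P_lb| ≤ k_p, all SoD constraints satisfied) then R_s \ {r ∈ R_s : P(r) ∩ P_lb = ∅} is also a solution, so the instance has a solution iff the instance restricted to the role set R'' = {r ∈ R : P(r) ∩ P_lb ≠ ∅}, with each constraint ⟨X,t⟩ replaced by ⟨X ∩ R'', t⟩, has a solution. -/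
lemma filter_sol {ρ π : Type} [DecidableEq ρ] [DecidableEq π]
    (R : Finset ρ) (Pa : ρ → Finset π) (Plb : Finset π)
    (D : Finset (Finset ρ × ℕ)) (kr kp : ℕ) (Rs : Finset ρ)
    (h : UAQSol R Pa Plb D kr kp Rs) :
    UAQSol R Pa Plb D kr kp (Rs.filter (fun r => (Pa r ∩ Plb).Nonempty)) := by
  obtain ⟨hsub, hcard, hcov, hextra, hcon⟩ := h
  have hfs : Rs.filter (fun r => (Pa r ∩ Plb).Nonempty) ⊆ Rs := Finset.filter_subset _ _
  refine ⟨hfs.trans hsub, le_trans (Finset.card_le_card hfs) hcard, ?_, ?_, ?_⟩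
  · intro p hp
    obtain ⟨r, hr, hpr⟩ := Finset.mem_biUnion.1 (hcov hp)
    exact Finset.mem_biUnion.2 ⟨r, Finset.mem_filter.2 ⟨hr, ⟨p, Finset.mem_inter.2 ⟨hpr, hp⟩⟩⟩, hpr⟩
  · refine le_trans (Finset.card_le_card ?_) hextra
    exact Finset.sdiff_subset_sdiff (Finset.biUnion_subset_biUnion_of_subset_left _ hfs) le_rfl
  · intro c hc
    exact lt_of_le_of_lt (Finset.card_le_card (Finset.inter_subset_inter_right hfs)) (hcon c hc)

/-- Safety of Reduction Rule 0/1, part (i)/(iii): removing from a solution all roles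
authorized for no permission of `P_lb` again yields a solution; hence the instance has
a solution iff its restriction to roles meeting `P_lb` (with each constraint `⟨X,t⟩`
replaced by `⟨X ∩ R'', t⟩`) has one. -/
theorem stmt18 {ρ π : Type} [DecidableEq ρ] [DecidableEq π]
    (R : Finset ρ) (Pa : ρ → Finset π) (Plb : Finset π)
    (D : Finset (Finset ρ × ℕ)) (kr kp : ℕ) :
    (∀ Rs : Finset ρ, UAQSol R Pa Plb D kr kp Rs →
      UAQSol R Pa Plb D kr kp (Rs.filter (fun r => (Pa r ∩ Plb).Nonempty))) ∧
    ((∃ Rs, UAQSol R Pa Plb D kr kp Rs) ↔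
      (∃ Rs, UAQSol (R.filter (fun r => (Pa r ∩ Plb).Nonempty)) Pa Plb
        (D.image (fun c => (c.1 ∩ R.filter (fun r => (Pa r ∩ Plb).Nonempty), c.2)))
        kr kp Rs)) := by
  set Rf := R.filter (fun r => (Pa r ∩ Plb).Nonempty) with hRf
  refine ⟨fun Rs h => filter_sol R Pa Plb D kr kp Rs h, ?_, ?_⟩
  · rintro ⟨Rs, h⟩
    obtain ⟨hsub, hcard, hcov, hextra, hcon⟩ := filter_sol R Pa Plb D kr kp Rs h
    refine ⟨Rs.filter (fun r => (Pa r ∩ Plb).Nonempty), ?_, hcard, hcov, hextra, ?_⟩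
    · intro r hr
      have := Finset.mem_filter.1 hr
      exact Finset.mem_filter.2 ⟨hsub hr, this.2⟩
    · intro c hc
      obtain ⟨d, hd, rfl⟩ := Finset.mem_image.1 hc
      refine lt_of_le_of_lt ?_ (hcon d hd)
      exact Finset.card_le_card (Finset.inter_subset_inter le_rfl Finset.inter_subset_left)
  · rintro ⟨Rs, hsub, hcard, hcov, hextra, hcon⟩
    refine ⟨Rs, hsub.trans (Finset.filter_subset _ _), hcard, hcov, hextra, ?_⟩
    intro c hc
    have := hcon (c.1 ∩ Rf, c.2) (Finset.mem_image.2 ⟨c, hc, rfl⟩)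
    have heq : Rs ∩ (c.1 ∩ Rf) = Rs ∩ c.1 := by
      ext r
      simp only [Finset.mem_inter]
      exact ⟨fun ⟨a, b, _⟩ => ⟨a, b⟩, fun ⟨a, b⟩ => ⟨a, b, hsub a⟩⟩
    simpa [heq] using this
end
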